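/- arXiv:2506.09382 — 4 statements merged into one kernel-verified Lean document; each statement's English description precedes it below -/
import Mathlib

section
/- Let $z=(z_0,\dots,z_{n-1})\in\mathrm{Mat}_{2,n}(\mathbb{C})$ and define linear polynomials $l_k(x)=(1,x)z_k=z_{0k}+xz_{1k}$. Let $\Phi_n(z)\in\mathrm{Mat}_{r+1,n}(\mathbb{C})$ be the Veronese image with entries $\varphi_{ij}(z)=\sum z_{0j_1}\cdots z_{0j_{r-i}}z_{1j_{r-i+1}}\cdots z_{1j_r}$ summed over $0\le j_p<n$ with $j_1+\cdots+j_r=j$, and let $L_j(y)=\mathbf{y}\,\Phi_n(z)_j$ where $\mathbf{y}=(1,y_1,\dots,y_r)$. If $y_i=E_i(x_1,\dots,x_r)$ is the $i$-th elementary symmetric polynomial in variables $x_1,\dots,x_r$, then $\sum_{0\le j<n}L_j(y)T^j \equiv \prod_{1\le i\le r}\bigl(l_0(x_i)+l_1(x_i)T+\cdots+l_{n-1}(x_i)T^{n-1}\bigr) \pmod{T^n}$ as polynomials in $x_1,\dots,x_r,T$. -/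
open Finset

/-- Entries of the generalized Veronese map `Φ_n : Mat_{2,n}(ℂ) → Mat_{r+1,n}(ℂ)`:
`φ_{ij}(z) = ∑ z_{0,j₁}⋯z_{0,j_{r-i}} z_{1,j_{r-i+1}}⋯z_{1,j_r}` over `j₁+⋯+j_r = j`. -/
noncomputable def phiV (r n : ℕ) (z : Matrix (Fin 2) (Fin n) ℂ) (i : ℕ) (j : Fin n) : ℂ :=
  ∑ f ∈ (Fintype.piFinset fun _ : Fin r => (Finset.univ : Finset (Fin n))).filter
      (fun f => ∑ p, ((f p : ℕ)) = (j : ℕ)),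
    ∏ p : Fin r, z (if (p : ℕ) < r - i then 0 else 1) (f p)


lemma card_filter_coe_lt {r m : ℕ} (h : m ≤ r) :
    ((univ : Finset (Fin r)).filter fun x : Fin r => (x : ℕ) < m).card = m := by
  rcases eq_or_lt_of_le h with rfl | h
  · rw [Finset.filter_true_of_mem (fun x _ => x.isLt), card_univ, Fintype.card_fin]
  · have : ((univ : Finset (Fin r)).filter fun x : Fin r => (x : ℕ) < m) = Iio (⟨m, h⟩ : Fin r) := by
      ext x; simp [Fin.lt_def]
    rw [this, Fin.card_Iio]

lemma perm_invariance {r n : ℕ} (z : Matrix (Fin 2) (Fin n) ℂ) (σ : Fin r → Fin 2)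
    (e : Equiv.Perm (Fin r)) (j : ℕ) :
    ∑ f ∈ (Fintype.piFinset fun _ : Fin r => (univ : Finset (Fin n))).filter
        (fun f => ∑ p, ((f p : ℕ)) = j), ∏ p : Fin r, z (σ (e p)) (f p)
  = ∑ f ∈ (Fintype.piFinset fun _ : Fin r => (univ : Finset (Fin n))).filter
        (fun f => ∑ p, ((f p : ℕ)) = j), ∏ p : Fin r, z (σ p) (f p) := by
  rw [Finset.sum_filter, Finset.sum_filter, Fintype.piFinset_univ]
  refine Fintype.sum_equiv (Equiv.arrowCongr e (Equiv.refl (Fin n))) _ _ fun f => ?_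
  have h1 : ∑ p, ((f (e.symm p) : ℕ)) = ∑ p, ((f p : ℕ)) := Equiv.sum_comp e.symm (fun p => ((f p : ℕ)))
  have h2 : ∏ p, z (σ p) (f (e.symm p)) = ∏ p, z (σ (e p)) (f p) := by
    have := Equiv.prod_comp e.symm (fun q => z (σ (e q)) (f q))
    simpa using this
  simp [Equiv.arrowCongr, h1, h2]

lemma indicator_sum {r n : ℕ} (z : Matrix (Fin 2) (Fin n) ℂ) (t : Finset (Fin r)) (j : Fin n) :
    ∑ f ∈ (Fintype.piFinset fun _ : Fin r => (univ : Finset (Fin n))).filter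
        (fun f => ∑ p, ((f p : ℕ)) = (j : ℕ)),
      ∏ p : Fin r, z (if p ∈ t then 1 else 0) (f p) = phiV r n z t.card j := by
  classical
  set i := t.card with hi_def
  have hi : i ≤ r := by
    simpa using Finset.card_le_card (Finset.subset_univ t)
  set σ : Fin r → Fin 2 := fun p => if (p : ℕ) < r - i then 0 else 1 with hσ
  -- cardinalities
  have hc1 : Fintype.card {x : Fin r // x ∈ t}
      = Fintype.card {x : Fin r // ¬ ((x : ℕ) < r - i)} := by
    rw [show Fintype.card {x : Fin r // x ∈ t} = Fintype.card t from rfl,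
      Fintype.card_coe, Fintype.card_subtype]
    have hlt := card_filter_coe_lt (show r - i ≤ r by omega)
    have hadd := Finset.card_filter_add_card_filter_not
      (s := (univ : Finset (Fin r))) (p := fun x : Fin r => (x : ℕ) < r - i)
    rw [card_univ, Fintype.card_fin] at hadd
    omega
  have hc2 : Fintype.card {x : Fin r // ¬ x ∈ t}
      = Fintype.card {x : Fin r // ¬ ¬ ((x : ℕ) < r - i)} := by
    rw [Fintype.card_subtype, Fintype.card_subtype]
    have hlt := card_filter_coe_lt (show r - i ≤ r by omega)
    have hadd := Finset.card_filter_add_card_filter_not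
      (s := (univ : Finset (Fin r))) (p := fun x : Fin r => x ∈ t)
    rw [card_univ, Fintype.card_fin] at hadd
    have ht : (Finset.filter (fun x : Fin r => x ∈ t) univ).card = i := by
      rw [Finset.filter_univ_mem]
    have hnn : (Finset.filter (fun x : Fin r => ¬ ¬ ((x : ℕ) < r - i)) univ)
        = (Finset.filter (fun x : Fin r => (x : ℕ) < r - i) univ) := by
      ext x; simp only [Finset.mem_filter, not_not]
    rw [hnn]
    omega
  set e1 : {x : Fin r // x ∈ t} ≃ {x : Fin r // ¬ ((x : ℕ) < r - i)} :=
    Fintype.equivOfCardEq hc1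
  set e2 : {x : Fin r // ¬ x ∈ t} ≃ {x : Fin r // ¬ ¬ ((x : ℕ) < r - i)} :=
    Fintype.equivOfCardEq hc2
  set e : Equiv.Perm (Fin r) := Equiv.subtypeCongr e1 e2 with he_def
  have key : ∀ p : Fin r, (if p ∈ t then (1 : Fin 2) else 0) = σ (e p) := by
    intro p
    by_cases hp : p ∈ t
    · have : e p = ((e1 ⟨p, hp⟩ : {x : Fin r // ¬ ((x : ℕ) < r - i)}) : Fin r) := by
        simp [he_def, Equiv.subtypeCongr, hp]
      rw [if_pos hp, hσ]
      simp only [this]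
      rw [if_neg (e1 ⟨p, hp⟩).2]
    · have : e p = ((e2 ⟨p, hp⟩ : {x : Fin r // ¬ ¬ ((x : ℕ) < r - i)}) : Fin r) := by
        simp [he_def, Equiv.subtypeCongr, hp]
      rw [if_neg hp, hσ]
      simp only [this]
      rw [if_pos (not_not.mp (e2 ⟨p, hp⟩).2)]
  calc ∑ f ∈ (Fintype.piFinset fun _ : Fin r => (univ : Finset (Fin n))).filter
        (fun f => ∑ p, ((f p : ℕ)) = (j : ℕ)),
      ∏ p : Fin r, z (if p ∈ t then 1 else 0) (f p)
      = ∑ f ∈ (Fintype.piFinset fun _ : Fin r => (univ : Finset (Fin n))).filter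
        (fun f => ∑ p, ((f p : ℕ)) = (j : ℕ)),
      ∏ p : Fin r, z (σ (e p)) (f p) := by
        refine Finset.sum_congr rfl fun f _ => Finset.prod_congr rfl fun p _ => ?_
        rw [key p]
    _ = ∑ f ∈ (Fintype.piFinset fun _ : Fin r => (univ : Finset (Fin n))).filter
        (fun f => ∑ p, ((f p : ℕ)) = (j : ℕ)),
      ∏ p : Fin r, z (σ p) (f p) := perm_invariance z σ e (j : ℕ)
    _ = phiV r n z i j := rfl

/-- with `l_k(x) = z_{0k} + x z_{1k}`, `L_j(y) = 𝐲 Φ_n(z)_j` and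
`y_i = E_i(x₁,…,x_r)`, one has
`∑_j L_j(y) T^j ≡ ∏_i (l₀(x_i) + l₁(x_i)T + ⋯ + l_{n-1}(x_i)T^{n-1}) mod Tⁿ`
as polynomials in `x₁,…,x_r` and `T`. -/
theorem stmt5 (r n : ℕ) (z : Matrix (Fin 2) (Fin n) ℂ) :
    let l : Fin n → Fin r → MvPolynomial (Fin r) ℂ := fun k i =>
      MvPolynomial.C (z 0 k) + MvPolynomial.X i * MvPolynomial.C (z 1 k)
    let L : Fin n → MvPolynomial (Fin r) ℂ := fun j =>
      ∑ i ∈ Finset.range (r + 1),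
        MvPolynomial.esymm (Fin r) ℂ i * MvPolynomial.C (phiV r n z i j)
    ∀ j : Fin n,
      (∏ i : Fin r, ∑ k : Fin n, Polynomial.C (l k i) * Polynomial.X ^ (k : ℕ)).coeff (j : ℕ)
        = L j := by
  intro l L j
  classical
  -- Step 1 : expand the product of the generating polynomials
  have step1 : (∏ i : Fin r, ∑ k : Fin n,
        Polynomial.C (l k i) * Polynomial.X ^ (k : ℕ)).coeff (j : ℕ)
      = ∑ f ∈ (Fintype.piFinset fun _ : Fin r => (univ : Finset (Fin n))).filter
          (fun f => ∑ p, ((f p : ℕ)) = (j : ℕ)), ∏ p : Fin r, l (f p) p := by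
    rw [show (∏ i : Fin r, ∑ k : Fin n, Polynomial.C (l k i) * Polynomial.X ^ (k : ℕ))
        = ∑ f ∈ Fintype.piFinset (fun _ : Fin r => (univ : Finset (Fin n))),
            ∏ p : Fin r, Polynomial.C (l (f p) p) * Polynomial.X ^ ((f p : ℕ)) from
      Finset.prod_univ_sum _ _]
    rw [Polynomial.finset_sum_coeff, Finset.sum_filter]
    apply Finset.sum_congr rfl
    intro f _
    rw [Finset.prod_mul_distrib, ← map_prod, Finset.prod_pow_eq_pow_sum,
      Polynomial.coeff_C_mul, Polynomial.coeff_X_pow]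
    by_cases h : ∑ p, ((f p : ℕ)) = (j : ℕ)
    · rw [if_pos h.symm, if_pos h, mul_one]
    · rw [if_neg (fun hh => h hh.symm), if_neg h, mul_zero]
  -- Step 2 : binomial expansion of each product ∏ l
  have step2 : ∀ f : Fin r → Fin n, ∏ p : Fin r, l (f p) p
      = ∑ t ∈ (univ : Finset (Fin r)).powerset,
          (∏ p ∈ t, MvPolynomial.X p)
            * MvPolynomial.C (∏ p : Fin r, z (if p ∈ t then 1 else 0) (f p)) := by
    intro f
    have hrw : ∀ p : Fin r, l (f p) p
        = (MvPolynomial.X p * MvPolynomial.C (z 1 (f p))) + MvPolynomial.C (z 0 (f p)) := by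
      intro p; simp only [l]; ring
    rw [Finset.prod_congr rfl (fun p _ => hrw p), Finset.prod_add]
    apply Finset.sum_congr rfl
    intro t ht
    rw [Finset.prod_mul_distrib, ← map_prod, ← map_prod, mul_assoc, ← map_mul]
    congr 1
    congr 1
    rw [← Finset.prod_filter_mul_prod_filter_not univ (· ∈ t)
      (fun p => z (if p ∈ t then 1 else 0) (f p))]
    congr 1
    · rw [Finset.filter_univ_mem]
      exact Finset.prod_congr rfl fun p hp => by rw [if_pos hp]
    · rw [show Finset.filter (fun p : Fin r => ¬ p ∈ t) univ = univ \ t from by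
        rw [Finset.filter_not, Finset.filter_univ_mem]]
      exact Finset.prod_congr rfl fun p hp => by
        rw [if_neg (Finset.mem_sdiff.mp hp).2]
  -- Step 3 : regroup the RHS by subsets
  have step3 : L j = ∑ t ∈ (univ : Finset (Fin r)).powerset,
      (∏ p ∈ t, MvPolynomial.X p) * MvPolynomial.C (phiV r n z t.card j) := by
    have hfib : ∑ t ∈ (univ : Finset (Fin r)).powerset,
        (∏ p ∈ t, MvPolynomial.X p) * MvPolynomial.C (phiV r n z t.card j)
      = ∑ i ∈ Finset.range (r + 1), ∑ t ∈ (univ : Finset (Fin r)).powerset.filter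
            (fun t => t.card = i),
          (∏ p ∈ t, MvPolynomial.X p) * MvPolynomial.C (phiV r n z t.card j) := by
      refine (Finset.sum_fiberwise_of_maps_to ?_ _).symm
      intro t ht
      exact Finset.mem_range.mpr (Nat.lt_succ_of_le
        (by simpa using Finset.card_le_card (Finset.mem_powerset.mp ht)))
    rw [hfib]
    simp only [L, MvPolynomial.esymm]
    apply Finset.sum_congr rfl
    intro i _
    rw [Finset.sum_mul, ← Finset.powersetCard_eq_filter]
    apply Finset.sum_congr rfl
    intro t ht
    rw [(Finset.mem_powersetCard.mp ht).2]
  -- Put everything together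
  rw [step1, step3]
  rw [Finset.sum_congr rfl fun f _ => step2 f, Finset.sum_comm]
  apply Finset.sum_congr rfl
  intro t _
  rw [← Finset.mul_sum, ← map_sum, indicator_sum]
end

section
/- Let $\lambda=(n_1,\dots,n_\ell)$ be a partition of $N$ and let $Z_2\subset\mathrm{Mat}_{2,N}(\mathbb{C})$ be the generic stratum (matrices $z$ such that $\det z_\mu\ne0$ for every subdiagram $\mu\subset\lambda$ with $|\mu|=2$). Then the Veronese map $\Phi_\lambda:\mathrm{Mat}_{2,N}(\mathbb{C})\to\mathrm{Mat}_{r+1,N}(\mathbb{C})$, defined blockwise by $\Phi_\lambda(z^{(1)},\dots,z^{(\ell)})=(\Phi_{n_1}(z^{(1)}),\dots,\Phi_{n_\ell}(z^{(\ell)}))$, maps $Z_2$ into the generic stratum $Z_{r+1}\subset\mathrm{Mat}_{r+1,N}(\mathbb{C})$ (matrices $w$ with $\det w_\mu\ne0$ for every subdiagram $\mu\subset\lambda$ with $|\mu|=r+1$). -/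
open Finset

/-!
For one block write `A = ∑ⱼ z₀ⱼ Tʲ` and `B = ∑ⱼ z₁ⱼ Tʲ`; column `j` of `Φ_n(z)` is the vector
of `Tʲ`-coefficients of `A ^ (r - i) * B ^ i`, `i = 0, …, r`. A linear relation `c` among the
columns of `Φ_λ(z)_μ` therefore says that the binary form `F = ∑ cᵢ X₀ ^ (r - i) X₁ ^ i` satisfies
`T ^ μₖ ∣ F(Aₖ, Bₖ)` for every block `k`. Over `ℂ`, `F` is a constant times a product of `r` nonzero
linear forms `x₀ X₀ + x₁ X₁`. Genericity of `z` gives two facts: in a block with `μₖ ≥ 2` no factor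
`x₀ Aₖ + x₁ Bₖ` is divisible by `T²`, so at least `μₖ` factors are divisible by `T`; and no nonzero
linear form vanishes at `T = 0` on two different blocks. Hence `∑ μₖ ≤ r < |μ|`.
-/

open Polynomial Matrix

theorem linearIndependent_iff_forall_dotProduct_eq_zero {K ι m : Type*} [Field K] [Fintype ι]
    [Fintype m] [DecidableEq m] (hcard : Fintype.card ι = Fintype.card m) (v : ι → m → K) :
    LinearIndependent K v ↔ ∀ c : m → K, (∀ p, c ⬝ᵥ v p = 0) → c = 0 := by
  set e := Fintype.equivOfCardEq hcard
  set M : Matrix m m K := Matrix.of fun a => v (e.symm a)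
  have hv : LinearIndependent K v ↔ M.det ≠ 0 := by
    rw [← linearIndependent_equiv e.symm, ← isUnit_iff_ne_zero, ← Matrix.isUnit_iff_isUnit_det,
      ← Matrix.linearIndependent_rows_iff_isUnit]
    rfl
  have hM : ∀ c, M *ᵥ c = 0 ↔ ∀ p, c ⬝ᵥ v p = 0 := fun c => by
    rw [funext_iff, e.symm.forall_congr_left]
    simp [M, Matrix.mulVec, dotProduct_comm]
  rw [hv, Ne, ← Matrix.exists_mulVec_eq_zero_iff, not_exists]
  refine forall_congr' fun c => ?_
  rw [hM]
  tauto

theorem Multiset.sum_countP_le_card {ι α : Type*} [Fintype ι] (S : Multiset α)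
    (P : ι → α → Prop) [∀ k, DecidablePred (P k)]
    (h : ∀ x ∈ S, ∀ k k', P k x → P k' x → k = k') :
    ∑ k, S.countP (P k) ≤ Multiset.card S := by
  induction S using Multiset.induction_on with
  | empty => simp
  | cons a S ih =>
    have hS := ih fun x hx => h x (Multiset.mem_cons_of_mem hx)
    have ha : ∑ k, (if P k a then 1 else 0) ≤ 1 := by
      rw [Finset.sum_boole, Nat.cast_id, Finset.card_le_one]
      intro k hk k' hk'
      exact h a (Multiset.mem_cons_self a S) k k' (by simpa using hk) (by simpa using hk')
    simp only [Multiset.countP_cons, Finset.sum_add_distrib, Multiset.card_cons]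
    omega

theorem Prime.le_countP_dvd_of_pow_dvd_prod {M ι : Type*} [CommMonoidWithZero M]
    [IsCancelMulZero M] {p : M} (hp : Prime p) [DecidablePred (p ∣ ·)] (f : ι → M)
    (S : Multiset ι) {m : ℕ} (hdvd : p ^ m ∣ (S.map f).prod) (hsq : ∀ i ∈ S, p ^ 2 ∣ f i → m ≤ 1) :
    m ≤ S.countP (fun i => p ∣ f i) := by
  induction S using Multiset.induction_on generalizing m with
  | empty =>
    rw [Multiset.countP_zero, Nat.le_zero]
    by_contra hm
    exact hp.not_isUnit (isUnit_of_dvd_one ((dvd_pow_self p hm).trans (by simpa using hdvd)))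
  | cons a S ih =>
    have hsq' : ∀ i ∈ S, p ^ 2 ∣ f i → m ≤ 1 := fun i hi => hsq i (Multiset.mem_cons_of_mem hi)
    rw [Multiset.map_cons, Multiset.prod_cons] at hdvd
    rw [Multiset.countP_cons]
    by_cases ha : p ∣ f a
    · obtain ⟨g, hg⟩ := ha
      rw [if_pos ⟨g, hg⟩]
      by_cases hpg : p ∣ g
      · have := hsq a (Multiset.mem_cons_self a S) (by rw [hg, sq]; exact mul_dvd_mul_left p hpg)
        omega
      obtain _ | m := m
      · omega
      rw [hg, pow_succ', mul_assoc] at hdvd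
      have := ih (hp.pow_dvd_of_dvd_mul_left m hpg ((mul_dvd_mul_iff_left hp.ne_zero).1 hdvd))
        fun i hi h2 => (hsq' i hi h2).trans' (by omega)
      omega
    · rw [if_neg ha]
      exact ih (hp.pow_dvd_of_dvd_mul_left m ha hdvd) hsq'

theorem Polynomial.coeff_prod_ofFn {R : Type*} [CommSemiring R] [DecidableEq R] {r n : ℕ}
    (w : Fin r → Fin n → R) (j : ℕ) :
    (∏ p, ofFn n (w p)).coeff j =
      ∑ f ∈ (Fintype.piFinset fun _ : Fin r => (univ : Finset (Fin n))).filter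
        (fun f => ∑ p, (f p : ℕ) = j), ∏ p, w p (f p) := by
  simp only [ofFn_eq_sum_monomial, Finset.prod_univ_sum, ← C_mul_X_pow_eq_monomial,
    Finset.prod_mul_distrib, ← map_prod, Finset.prod_pow_eq_pow_sum, finsetSum_coeff,
    coeff_C_mul_X_pow, Finset.sum_filter, eq_comm]

theorem Polynomial.X_dvd_ofFn_iff {R : Type*} [Semiring R] [DecidableEq R] {n : ℕ} (hn : 0 < n)
    (w : Fin n → R) : X ∣ ofFn n w ↔ w ⟨0, hn⟩ = 0 := by
  rw [X_dvd_iff, ofFn_coeff_eq_val_of_lt _ hn]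

theorem phiV_eq_coeff {r n : ℕ} (z : Matrix (Fin 2) (Fin n) ℂ) {i : ℕ} (hi : i ≤ r) (j : Fin n) :
    phiV r n z i j = (ofFn n (z 0) ^ (r - i) * ofFn n (z 1) ^ i).coeff j := by
  obtain ⟨t, rfl⟩ := Nat.exists_eq_add_of_le' hi
  have hprod : ∏ p : Fin (t + i), ofFn n (z (if (p : ℕ) < t then 0 else 1)) =
      ofFn n (z 0) ^ t * ofFn n (z 1) ^ i := by
    rw [Fin.prod_univ_eq_prod_range (fun p => ofFn n (z (if p < t then 0 else 1))),
      Finset.prod_range_add]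
    congr 1
    · rw [Finset.prod_congr rfl fun p hp => by rw [if_pos (Finset.mem_range.1 hp)]]
      simp
    · rw [Finset.prod_congr rfl fun p _ => by rw [if_neg (by omega)]]
      simp
  rw [phiV, Nat.add_sub_cancel, ← hprod, coeff_prod_ofFn]

theorem MvPolynomial.aeval_ofFn_sum_C_mul_X {R : Type*} [CommSemiring R] [DecidableEq R] {m n : ℕ}
    (z : Matrix (Fin m) (Fin n) R) (x : Fin m → R) :
    MvPolynomial.aeval (fun i => ofFn n (z i)) (∑ i, MvPolynomial.C (x i) * MvPolynomial.X i) =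
      ofFn n (x ᵥ* z) := by
  simp [vecMul_eq_sum, Polynomial.smul_eq_C_mul]

theorem MvPolynomial.IsHomogeneous.multiset_prod {σ ι R : Type*} [CommSemiring R]
    (s : Multiset ι) (φ : ι → MvPolynomial σ R) (n : ι → ℕ)
    (h : ∀ i ∈ s, (φ i).IsHomogeneous (n i)) : (s.map φ).prod.IsHomogeneous (s.map n).sum := by
  induction s using Multiset.induction_on with
  | empty => simpa using isHomogeneous_one σ R
  | cons a s ih =>
    simpa using (h a (Multiset.mem_cons_self a s)).mul
      (ih fun i hi => h i (Multiset.mem_cons_of_mem hi))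

theorem Polynomial.homogenize_ofFn_comp_rev {R : Type*} [CommSemiring R] [DecidableEq R] (r : ℕ)
    (c : Fin (r + 1) → R) :
    (ofFn (r + 1) (c ∘ Fin.rev)).homogenize r =
      ∑ i : Fin (r + 1),
        MvPolynomial.C (c i) * MvPolynomial.X 0 ^ (r - i) * MvPolynomial.X 1 ^ (i : ℕ) := by
  apply homogenize_eq_of_isHomogeneous
  · refine MvPolynomial.IsHomogeneous.sum _ _ _ fun i _ => ?_
    have h := (MvPolynomial.isHomogeneous_C_mul_X_pow (c i) (0 : Fin 2) (r - i)).mul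
      (MvPolynomial.isHomogeneous_X_pow (1 : Fin 2) (i : ℕ))
    rwa [Nat.sub_add_cancel (Nat.lt_succ_iff.1 i.isLt)] at h
  · simp only [map_sum, map_mul, MvPolynomial.aeval_C, MvPolynomial.aeval_X, map_pow,
      ofFn_eq_sum_monomial]
    refine Fintype.sum_equiv Fin.revPerm _ _ fun i => ?_
    simp [Fin.val_rev, ← C_mul_X_pow_eq_monomial]

theorem Polynomial.exists_homogenize_eq_C_mul_prod_linear {K : Type*} [Field K] [IsAlgClosed K]
    {q : K[X]} (hq : q ≠ 0) {r : ℕ} (hr : q.natDegree ≤ r) :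
    ∃ a ≠ 0, ∃ S : Multiset (Fin 2 → K), Multiset.card S = r ∧ (∀ x ∈ S, x ≠ 0) ∧
      q.homogenize r = MvPolynomial.C a *
        (S.map fun x => ∑ i, MvPolynomial.C (x i) * MvPolynomial.X i).prod := by
  refine ⟨q.leadingCoeff, leadingCoeff_ne_zero.2 hq,
    Multiset.replicate (r - q.natDegree) ![0, 1] + q.roots.map fun ρ => ![1, -ρ], ?_, ?_, ?_⟩
  · simp only [Multiset.card_add, Multiset.card_replicate, Multiset.card_map,
      IsAlgClosed.card_roots_eq_natDegree]
    omega
  · intro x hx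
    rcases Multiset.mem_add.1 hx with hx | hx
    · rw [Multiset.eq_of_mem_replicate hx]
      exact fun h => one_ne_zero (congrFun h 1)
    · obtain ⟨ρ, -, rfl⟩ := Multiset.mem_map.1 hx
      exact fun h => one_ne_zero (congrFun h 0)
  · apply homogenize_eq_of_isHomogeneous
    · convert (MvPolynomial.isHomogeneous_C (Fin 2) q.leadingCoeff).mul
        (MvPolynomial.IsHomogeneous.multiset_prod _
          (fun x : Fin 2 → K => ∑ i, MvPolynomial.C (x i) * MvPolynomial.X i) (fun _ => 1)
          fun x _ => MvPolynomial.IsHomogeneous.sum _ _ _ fun i _ =>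
            MvPolynomial.isHomogeneous_C_mul_X _ i)
        using 1
      simp only [Multiset.map_const', Multiset.sum_replicate, smul_eq_mul, mul_one,
        Multiset.card_add, Multiset.card_replicate, Multiset.card_map,
        IsAlgClosed.card_roots_eq_natDegree, zero_add]
      omega
    · conv_rhs => rw [← C_leadingCoeff_mul_prod_multiset_X_sub_C (p := q)
        IsAlgClosed.card_roots_eq_natDegree]
      simp [map_multiset_prod, Multiset.map_map, sub_eq_add_neg]

section

variable {K : Type*} [Field K] {ℓ : ℕ} {n : Fin ℓ → ℕ}

/-- `z` lies in the generic stratum `Z_d`: for every subdiagram `μ ⊂ λ = (n k)ₖ` with `|μ| = d`,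
the columns of `z_μ` are linearly independent, i.e. `det z_μ ≠ 0`. -/
def IsGeneric (d : ℕ) (z : ∀ k, Matrix (Fin d) (Fin (n k)) K) : Prop :=
  ∀ μ : Fin ℓ → ℕ, ∀ hμ : (∀ k, μ k ≤ n k), (∑ k, μ k) = d →
    LinearIndependent K
      (fun p : (Σ k, Fin (μ k)) => fun i : Fin d => z p.1 i (Fin.castLE (hμ p.1) p.2))

theorem IsGeneric.eq_zero_of_vecMul_eq_zero {d : ℕ} {z : ∀ k, Matrix (Fin d) (Fin (n k)) K}
    (hz : IsGeneric d z) (μ : Fin ℓ → ℕ) (hμ : ∀ k, μ k ≤ n k) (hsum : ∑ k, μ k = d)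
    {x : Fin d → K} (hx : ∀ p : Σ k, Fin (μ k), (x ᵥ* z p.1) (Fin.castLE (hμ p.1) p.2) = 0) :
    x = 0 :=
  (linearIndependent_iff_forall_dotProduct_eq_zero (by simp [hsum]) _).1 (hz μ hμ hsum) x hx

theorem IsGeneric.eq_zero_of_same_block {z : ∀ k, Matrix (Fin 2) (Fin (n k)) K}
    (hz : IsGeneric 2 z) {k : Fin ℓ} (hk : 2 ≤ n k) {x : Fin 2 → K}
    (hx : ∀ j : Fin (n k), (j : ℕ) < 2 → (x ᵥ* z k) j = 0) : x = 0 := by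
  classical
  refine hz.eq_zero_of_vecMul_eq_zero (Pi.single k 2) (fun m => ?_) (by simp) ?_
  · by_cases h : m = k
    · subst h; simpa using hk
    · simp [h]
  · rintro ⟨m, j⟩
    obtain rfl : m = k := by
      by_contra h
      have := j.2
      simp [h] at this
    exact hx _ (by simpa using j.2)

theorem IsGeneric.eq_zero_of_distinct_blocks {z : ∀ k, Matrix (Fin 2) (Fin (n k)) K}
    (hz : IsGeneric 2 z) {k k' : Fin ℓ} (hkk' : k ≠ k') (hk : 0 < n k) (hk' : 0 < n k')
    {x : Fin 2 → K} (hx : (x ᵥ* z k) ⟨0, hk⟩ = 0) (hx' : (x ᵥ* z k') ⟨0, hk'⟩ = 0) : x = 0 := by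
  classical
  refine hz.eq_zero_of_vecMul_eq_zero (Pi.single k 1 + Pi.single k' 1) (fun m => ?_)
    (by simp [Finset.sum_add_distrib]) ?_
  · by_cases h : m = k
    · subst h; simpa [hkk'] using Nat.succ_le_of_lt hk
    · by_cases h' : m = k'
      · subst h'; simpa [h] using Nat.succ_le_of_lt hk'
      · simp [h, h']
  · rintro ⟨m, j⟩
    have hj := j.2
    by_cases h : m = k
    · subst h
      convert hx using 2
      exact Fin.ext (by simpa [hkk'] using hj)
    · by_cases h' : m = k'
      · subst h'
        convert hx' using 2
        exact Fin.ext (by simpa [h] using hj)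
      · simp [h, h'] at hj

theorem Polynomial.le_countP_X_dvd_ofFn_vecMul [DecidableEq K] {N m : ℕ}
    (z : Matrix (Fin 2) (Fin N) K) (S : Multiset (Fin 2 → K)) (hS : ∀ x ∈ S, x ≠ 0)
    (hz : 2 ≤ m → ∀ x, (∀ j : Fin N, (j : ℕ) < 2 → (x ᵥ* z) j = 0) → x = 0)
    [DecidablePred (X ∣ · : K[X] → Prop)]
    (hdvd : X ^ m ∣ (S.map fun x => ofFn N (x ᵥ* z)).prod) :
    m ≤ S.countP fun x => X ∣ ofFn N (x ᵥ* z) :=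
  prime_X.le_countP_dvd_of_pow_dvd_prod _ S hdvd fun x hx hsq => by
    by_contra! hm
    refine hS x hx (hz hm x fun j hj => ?_)
    rw [← ofFn_coeff_eq_val_of_lt (x ᵥ* z) j.2]
    exact X_pow_dvd_iff.1 hsq j hj

/-- `homogenize` puts the variable of `q` on `X 0`; reversing `c` makes `(A, B) ↦ ∑ cᵢ Aʳ⁻ⁱ Bⁱ`
the evaluation of the homogenization at the row polynomials `(A, B)` of `z`. -/
theorem X_pow_dvd_aeval_homogenize_of_dotProduct_phiV {N m r : ℕ} (z : Matrix (Fin 2) (Fin N) ℂ)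
    (c : Fin (r + 1) → ℂ) (hm : m ≤ N)
    (hc : ∀ s : Fin m, c ⬝ᵥ (fun i : Fin (r + 1) => phiV r N z i (Fin.castLE hm s)) = 0) :
    X ^ m ∣
      MvPolynomial.aeval (fun i => ofFn N (z i)) ((ofFn (r + 1) (c ∘ Fin.rev)).homogenize r) := by
  rw [X_pow_dvd_iff]
  intro s hs
  rw [homogenize_ofFn_comp_rev, ← hc ⟨s, hs⟩]
  simp only [map_sum, map_mul, MvPolynomial.aeval_C, MvPolynomial.aeval_X, map_pow,
    finsetSum_coeff, algebraMap_eq, mul_assoc, coeff_C_mul, dotProduct]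
  refine Finset.sum_congr rfl fun i _ => ?_
  rw [phiV_eq_coeff z (Nat.lt_succ_iff.1 i.isLt)]
  rfl

theorem IsGeneric.veronese {r : ℕ} {z : ∀ k, Matrix (Fin 2) (Fin (n k)) ℂ} (hz : IsGeneric 2 z) :
    IsGeneric (r + 1) (fun k => Matrix.of fun (i : Fin (r + 1)) j => phiV r (n k) (z k) i j) := by
  classical
  intro μ hμ hsum
  rw [linearIndependent_iff_forall_dotProduct_eq_zero (by simp [hsum])]
  intro c hc
  by_contra hc0
  set q := ofFn (r + 1) (c ∘ Fin.rev)
  have hq : q ≠ 0 := fun h => hc0 <| funext fun i => by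
    simpa using congrFun (injective_ofFn (r + 1) (h.trans (ofFn_zero _).symm)) i.rev
  obtain ⟨a, ha, S, hScard, hS0, hqS⟩ :=
    exists_homogenize_eq_C_mul_prod_linear hq (Nat.lt_succ_iff.1 (ofFn_natDegree_lt (by omega) _))
  let P k x := 0 < μ k ∧ X ∣ ofFn (n k) (x ᵥ* z k)
  have hblock : ∀ k, μ k ≤ S.countP (P k) := fun k => by
    rcases (μ k).eq_zero_or_pos with h0 | hpos
    · omega
    rw [Multiset.countP_congr (p' := fun x => X ∣ ofFn (n k) (x ᵥ* z k)) rfl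
      fun x _ => propext (and_iff_right hpos)]
    refine le_countP_X_dvd_ofFn_vecMul (z k) S hS0
      (fun h2 x hx => hz.eq_zero_of_same_block (h2.trans (hμ k)) hx) ?_
    have := X_pow_dvd_aeval_homogenize_of_dotProduct_phiV (z k) c (hμ k) fun s => hc ⟨k, s⟩
    rw [hqS, map_mul, MvPolynomial.aeval_C, algebraMap_eq, (isUnit_C.2 ha.isUnit).dvd_mul_left,
      map_multiset_prod, Multiset.map_map, Function.comp_def] at this
    simpa only [MvPolynomial.aeval_ofFn_sum_C_mul_X] using this
  have hdisj : ∀ x ∈ S, ∀ k k', P k x → P k' x → k = k' := by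
    rintro x hx k k' ⟨hk, hxk⟩ ⟨hk', hxk'⟩
    by_contra hkk'
    have hnk := hk.trans_le (hμ k)
    have hnk' := hk'.trans_le (hμ k')
    exact hS0 x hx (hz.eq_zero_of_distinct_blocks hkk' hnk hnk'
      ((X_dvd_ofFn_iff hnk _).1 hxk) ((X_dvd_ofFn_iff hnk' _).1 hxk'))
  have := (Finset.sum_le_sum fun k _ => hblock k).trans (S.sum_countP_le_card P hdisj)
  omega

end

/-- the blockwise Veronese map `Φ_λ` sends the generic stratum
`Z₂ ⊂ Mat_{2,N}(ℂ)` into the generic stratum `Z_{r+1} ⊂ Mat_{r+1,N}(ℂ)`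
(genericity: for every subdiagram `μ ⊂ λ` of the appropriate weight, the square matrix of
selected columns is nonsingular, i.e. the selected columns are linearly independent). -/
theorem stmt7 (ℓ r : ℕ) (n : Fin ℓ → ℕ) (z : ∀ k, Matrix (Fin 2) (Fin (n k)) ℂ)
    (hz : ∀ μ : Fin ℓ → ℕ, ∀ hμ : (∀ k, μ k ≤ n k), (∑ k, μ k) = 2 →
      LinearIndependent ℂ
        (fun p : (Σ k, Fin (μ k)) => fun i : Fin 2 => z p.1 i (Fin.castLE (hμ p.1) p.2))) :
    ∀ μ : Fin ℓ → ℕ, ∀ hμ : (∀ k, μ k ≤ n k), (∑ k, μ k) = r + 1 →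
      LinearIndependent ℂ
        (fun p : (Σ k, Fin (μ k)) => fun i : Fin (r + 1) =>
          phiV r (n p.1) (z p.1) (i : ℕ) (Fin.castLE (hμ p.1) p.2)) :=
  IsGeneric.veronese hz
end

section
/- Let $\lambda=(n_1,\dots,n_\ell)$ be a partition of $N$, $r+1<N$, and let $z\in Z_{r+1}$ lie in the generic stratum (all $(r+1)\times(r+1)$ subdiagram minors $z_\mu$, $|\mu|=r+1$, are invertible). Suppose $a\in\mathbb{C}^{r+1}$ and $b\in\mathbb{C}^N$ (written in blocks $b^{(k)}\in\mathbb{C}^{n_k}$) satisfy ${}^ta\,z^{(k)}\Lambda_{n_k}^m b^{(k)}=0$ for all $1\le k\le\ell$ and $0\le m<n_k$, and $zb=0$. Then $a\cdot{}^tb=0$, i.e., $a=0$ or $b=0$. -/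
/-- The `m × m` shift matrix `Λ = (δ_{i+1,j})`. -/
def shiftM (m : ℕ) : Matrix (Fin m) (Fin m) ℂ :=
  Matrix.of fun i j => if (i : ℕ) + 1 = (j : ℕ) then 1 else 0

open Matrix

lemma shiftM_mulVec (n : ℕ) (v : Fin n → ℂ) (i : Fin n) :
    (shiftM n *ᵥ v) i = if h : (i : ℕ) + 1 < n then v ⟨(i:ℕ)+1, h⟩ else 0 := by
  unfold Matrix.mulVec dotProduct shiftM
  by_cases h : (i:ℕ) + 1 < n
  · rw [dif_pos h, Finset.sum_eq_single (⟨(i:ℕ)+1, h⟩ : Fin n)]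
    · simp
    · intro j _ hj
      simp only [Matrix.of_apply]
      rw [if_neg, zero_mul]
      intro hc; exact hj (Fin.ext hc.symm)
    · simp
  · rw [dif_neg h]
    apply Finset.sum_eq_zero
    intro j _
    simp only [Matrix.of_apply]
    rw [if_neg, zero_mul]
    intro hc; exact h (hc ▸ j.isLt)

lemma shiftM_pow_mulVec (n m : ℕ) (v : Fin n → ℂ) (i : Fin n) :
    ((shiftM n ^ m) *ᵥ v) i = if h : (i : ℕ) + m < n then v ⟨(i:ℕ)+m, h⟩ else 0 := by
  induction m generalizing i with
  | zero => simp
  | succ m ih =>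
      rw [pow_succ', ← Matrix.mulVec_mulVec, shiftM_mulVec]
      by_cases h : (i:ℕ)+1 < n
      · rw [dif_pos h, ih]
        by_cases h2 : (i:ℕ)+1+m < n
        · rw [dif_pos h2, dif_pos (show (i:ℕ)+(m+1) < n by omega)]
          congr 1
          exact Fin.ext (by simp; omega)
        · rw [dif_neg h2, dif_neg (show ¬((i:ℕ)+(m+1) < n) by omega)]
      · rw [dif_neg h, dif_neg (show ¬((i:ℕ)+(m+1) < n) by omega)]

lemma block_c_zero (n : ℕ) (c b : Fin n → ℂ)
    (H : ∀ m < n, ∑ j : Fin n, c j * (if h : (j:ℕ)+m < n then b ⟨(j:ℕ)+m, h⟩ else 0) = 0)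
    (e : Fin n) (he : b e ≠ 0) (htop : ∀ j : Fin n, (e:ℕ) < (j:ℕ) → b j = 0) :
    ∀ j : Fin n, (j:ℕ) ≤ (e:ℕ) → c j = 0 := by
  suffices h : ∀ J : ℕ, ∀ j : Fin n, (j:ℕ) = J → (j:ℕ) ≤ (e:ℕ) → c j = 0 by
    intro j hj; exact h j j rfl hj
  intro J
  induction J using Nat.strong_induction_on with
  | _ J ih =>
    intro j hjJ hje
    have hm : (e:ℕ) - (j:ℕ) < n := lt_of_le_of_lt (Nat.sub_le _ _) e.isLt
    have hsum := H ((e:ℕ) - (j:ℕ)) hm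
    rw [Finset.sum_eq_single j] at hsum
    · have hlt : (j:ℕ) + ((e:ℕ)-(j:ℕ)) < n := by omega
      rw [dif_pos hlt] at hsum
      have heq : (⟨(j:ℕ)+((e:ℕ)-(j:ℕ)), hlt⟩ : Fin n) = e := Fin.ext (by simp; omega)
      rw [heq] at hsum
      exact (mul_eq_zero.mp hsum).resolve_right he
    · intro i _ hij
      have hne : (i:ℕ) ≠ (j:ℕ) := fun h => hij (Fin.ext h)
      rcases lt_or_gt_of_ne hne with hlt | hgt
      · rw [ih (i:ℕ) (by omega) i rfl (by omega), zero_mul]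
      · by_cases hr : (i:ℕ) + ((e:ℕ)-(j:ℕ)) < n
        · rw [dif_pos hr, htop _ (by simp; omega), mul_zero]
        · rw [dif_neg hr, mul_zero]
    · intro h; exact absurd (Finset.mem_univ j) h

lemma exists_between_aux (ℓ : ℕ) (nn : Fin ℓ → ℕ) :
    ∀ d (w : Fin ℓ → ℕ), (∀ k, w k ≤ nn k) → (∑ k, w k) + d ≤ ∑ k, nn k →
    ∃ μ : Fin ℓ → ℕ, (∀ k, w k ≤ μ k) ∧ (∀ k, μ k ≤ nn k) ∧ ∑ k, μ k = (∑ k, w k) + d := by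
  intro d
  induction d with
  | zero => intro w hw _; exact ⟨w, fun k => le_refl _, hw, by simp⟩
  | succ d ih =>
    intro w hw hsum
    have hex : ∃ k, w k < nn k := by
      by_contra hc
      push_neg at hc
      have : ∑ k, nn k ≤ ∑ k, w k := Finset.sum_le_sum (fun k _ => hc k)
      omega
    obtain ⟨k0, hk0⟩ := hex
    have hsum' : ∑ k, Function.update w k0 (w k0 + 1) k = (∑ k, w k) + 1 := by
      rw [Finset.sum_update_of_mem (Finset.mem_univ k0),
        ← Finset.add_sum_erase _ w (Finset.mem_univ k0)]
      simp [Finset.sdiff_singleton_eq_erase]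
      ring
    obtain ⟨μ, hμ1, hμ2, hμ3⟩ := ih (Function.update w k0 (w k0 + 1))
      (fun k => by
        rcases eq_or_ne k k0 with rfl | h
        · simpa using hk0
        · simp [Function.update_apply, h]; exact hw k)
      (by rw [hsum']; omega)
    refine ⟨μ, fun k => le_trans ?_ (hμ1 k), hμ2, by rw [hμ3, hsum']; ring⟩
    rcases eq_or_ne k k0 with rfl | h
    · simp
    · simp [Function.update_apply, h]

lemma sum_castLE {n m : ℕ} (h : m ≤ n) (f : Fin n → ℂ)
    (hf : ∀ j : Fin n, m ≤ (j:ℕ) → f j = 0) :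
    ∑ j : Fin m, f (Fin.castLE h j) = ∑ j : Fin n, f j := by
  set F : ℕ → ℂ := fun j => if hj : j < n then f ⟨j, hj⟩ else 0 with hF
  have l1 : ∑ j : Fin m, f (Fin.castLE h j) = ∑ j : Fin m, F (j:ℕ) := by
    apply Finset.sum_congr rfl
    intro j _
    show f (Fin.castLE h j) = if hj : ((j:ℕ)) < n then f ⟨(j:ℕ), hj⟩ else 0
    rw [dif_pos (lt_of_lt_of_le j.isLt h)]
    rfl
  have l2 : ∑ j : Fin n, f j = ∑ j : Fin n, F (j:ℕ) := by
    apply Finset.sum_congr rfl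
    intro j _
    show f j = if hj : ((j:ℕ)) < n then f ⟨(j:ℕ), hj⟩ else 0
    rw [dif_pos j.isLt]
  rw [l1, l2, Fin.sum_univ_eq_sum_range, Fin.sum_univ_eq_sum_range]
  apply Finset.sum_subset (Finset.range_subset_range.mpr h)
  intro x hx hxm
  simp only [Finset.mem_range] at hx hxm
  show (if hj : x < n then f ⟨x, hj⟩ else 0) = 0
  rw [dif_pos hx]
  exact hf ⟨x, hx⟩ (by simp; omega)


/-- for `z` in the generic stratum `Z_{r+1}` (all weight-(r+1) subdiagram
column systems linearly independent, i.e. all `det z_μ ≠ 0`), if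
`ᵗa z^{(k)} Λ^m b^{(k)} = 0` for all `k, m < n_k` and `zb = 0`, then `a·ᵗb = 0`,
i.e. `a = 0` or `b = 0`. -/
theorem stmt14 (ℓ r : ℕ) (n : Fin ℓ → ℕ) (hN : r + 1 < ∑ k, n k)
    (z : ∀ k, Matrix (Fin (r + 1)) (Fin (n k)) ℂ)
    (hz : ∀ μ : Fin ℓ → ℕ, ∀ hμ : (∀ k, μ k ≤ n k), (∑ k, μ k) = r + 1 →
      LinearIndependent ℂ
        (fun p : (Σ k, Fin (μ k)) => fun i : Fin (r + 1) => z p.1 i (Fin.castLE (hμ p.1) p.2)))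
    (a : Fin (r + 1) → ℂ) (b : ∀ k, Fin (n k) → ℂ)
    (h1 : ∀ k, ∀ m < n k, ∑ i, a i * ((z k * shiftM (n k) ^ m).mulVec (b k)) i = 0)
    (h2 : ∀ i, ∑ k, ((z k).mulVec (b k)) i = 0) :
    a = 0 ∨ ∀ k, b k = 0 := by
  by_cases hb : ∀ k, b k = 0
  · exact Or.inr hb
  push_neg at hb
  left
  -- the coefficient vector cᵏ = ᵗa zᵏ
  set c : ∀ k, Fin (n k) → ℂ := fun k j => ∑ i, a i * z k i j with hc
  -- essential length of each block of b
  set w : Fin ℓ → ℕ := fun k =>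
    (Finset.univ.filter (fun j : Fin (n k) => b k j ≠ 0)).sup (fun j => (j:ℕ)+1) with hwdef
  have hw_le : ∀ k, w k ≤ n k := by
    intro k
    apply Finset.sup_le
    intro j _
    exact j.isLt
  have hw_zero : ∀ k, ∀ j : Fin (n k), w k ≤ (j:ℕ) → b k j = 0 := by
    intro k j hj
    by_contra hbj
    have : (j:ℕ)+1 ≤ w k := by
      rw [hwdef]
      exact Finset.le_sup (f := fun j : Fin (n k) => (j:ℕ)+1)
        (Finset.mem_filter.mpr ⟨Finset.mem_univ j, hbj⟩)
    omega
  have hw_ex : ∀ k, w k ≠ 0 → ∃ e : Fin (n k), (e:ℕ)+1 = w k ∧ b k e ≠ 0 := by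
    intro k hk
    have hne : (Finset.univ.filter (fun j : Fin (n k) => b k j ≠ 0)).Nonempty := by
      by_contra hemp
      rw [Finset.not_nonempty_iff_eq_empty] at hemp
      apply hk
      rw [hwdef]
      simp [hemp]
    obtain ⟨e, he, hsup⟩ := Finset.exists_mem_eq_sup _ hne (fun j : Fin (n k) => (j:ℕ)+1)
    exact ⟨e, hsup.symm, (Finset.mem_filter.mp he).2⟩
  -- convert h1 to scalar form
  have key : ∀ k, ∀ m < n k,
      ∑ j : Fin (n k), c k j * (if h : (j:ℕ)+m < n k then b k ⟨(j:ℕ)+m, h⟩ else 0) = 0 := by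
    intro k m hm
    have h' : ∑ i, a i * ((z k) *ᵥ ((shiftM (n k) ^ m) *ᵥ b k)) i = 0 := by
      rw [Matrix.mulVec_mulVec]; exact h1 k m hm
    set s : Fin (n k) → ℂ := (shiftM (n k) ^ m) *ᵥ b k with hs
    have expand : ∑ i, a i * ((z k) *ᵥ s) i = ∑ j : Fin (n k), c k j * s j := by
      calc ∑ i, a i * ((z k) *ᵥ s) i
          = ∑ i, ∑ j, a i * (z k i j * s j) := by
            simp [Matrix.mulVec, dotProduct, Finset.mul_sum]
        _ = ∑ j, ∑ i, a i * (z k i j * s j) := Finset.sum_comm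
        _ = ∑ j : Fin (n k), c k j * s j := by
            apply Finset.sum_congr rfl
            intro j _
            rw [hc, Finset.sum_mul]
            apply Finset.sum_congr rfl
            intro i _
            ring
    rw [expand] at h'
    have hrw : ∀ j : Fin (n k),
        s j = (if h : (j:ℕ)+m < n k then b k ⟨(j:ℕ)+m, h⟩ else 0) := by
      intro j
      rw [hs]
      exact shiftM_pow_mulVec _ _ _ _
    calc ∑ j : Fin (n k), c k j * (if h : (j:ℕ)+m < n k then b k ⟨(j:ℕ)+m, h⟩ else 0)
        = ∑ j : Fin (n k), c k j * s j :=
          Finset.sum_congr rfl (fun j _ => by rw [hrw j])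
      _ = 0 := h'
  -- Step A: c k vanishes on the first w k columns
  have stepA : ∀ k, ∀ j : Fin (n k), (j:ℕ) < w k → c k j = 0 := by
    intro k j hj
    have hk : w k ≠ 0 := by omega
    obtain ⟨e, he1, he2⟩ := hw_ex k hk
    exact block_c_zero (n k) (c k) (b k) (key k) e he2
      (fun j' hj' => hw_zero k j' (by omega)) j (by omega)
  -- Step B: r + 1 < ∑ w
  have stepB : r + 1 < ∑ k, w k := by
    by_contra hW
    push_neg at hW
    obtain ⟨μ, hμ1, hμ2, hμ3⟩ := exists_between_aux ℓ n (r + 1 - ∑ k, w k) w hw_le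
      (by omega)
    have hμsum : ∑ k, μ k = r + 1 := by omega
    have hli := hz μ hμ2 hμsum
    rw [Fintype.linearIndependent_iff] at hli
    obtain ⟨k0, hk0⟩ := hb
    have hwk0 : w k0 ≠ 0 := by
      intro h0
      apply hk0
      funext j
      exact hw_zero k0 j (by omega)
    obtain ⟨e, he1, he2⟩ := hw_ex k0 hwk0
    have helt : (e:ℕ) < μ k0 := by have := hμ1 k0; omega
    set g : (Σ k, Fin (μ k)) → ℂ := fun p => b p.1 (Fin.castLE (hμ2 p.1) p.2) with hg
    have hgsum : ∑ p : (Σ k, Fin (μ k)),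
        g p • (fun i : Fin (r + 1) => z p.1 i (Fin.castLE (hμ2 p.1) p.2)) = 0 := by
      funext i
      rw [Finset.sum_apply]
      have : ∀ p : (Σ k, Fin (μ k)),
          (g p • fun i : Fin (r + 1) => z p.1 i (Fin.castLE (hμ2 p.1) p.2)) i
          = b p.1 (Fin.castLE (hμ2 p.1) p.2) * z p.1 i (Fin.castLE (hμ2 p.1) p.2) := by
        intro p; simp [hg]
      rw [Finset.sum_congr rfl (fun p _ => this p)]
      rw [← Finset.univ_sigma_univ, Finset.sum_sigma]
      have inner : ∀ k, ∑ j : Fin (μ k),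
          b k (Fin.castLE (hμ2 k) j) * z k i (Fin.castLE (hμ2 k) j)
          = ((z k) *ᵥ (b k)) i := by
        intro k
        have := sum_castLE (hμ2 k) (fun j => b k j * z k i j)
          (fun j hj => by
            show b k j * z k i j = 0
            rw [hw_zero k j (le_trans (hμ1 k) hj), zero_mul])
        rw [this]
        simp [Matrix.mulVec, dotProduct, mul_comm]
      rw [Finset.sum_congr rfl (fun k _ => inner k)]
      exact h2 i
    have := hli g hgsum ⟨k0, ⟨(e:ℕ), helt⟩⟩
    exact he2 this
  -- Step C: conclude a = 0
  obtain ⟨μ, hμ1, hμ2, hμ3⟩ := exists_between_aux ℓ w (r + 1) (fun _ => 0)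
    (fun k => Nat.zero_le _) (by simp; omega)
  simp at hμ3
  have hμn : ∀ k, μ k ≤ n k := fun k => le_trans (hμ2 k) (hw_le k)
  have hli := hz μ hμn hμ3
  have hcard : Fintype.card (Σ k, Fin (μ k)) = r + 1 := by
    simp [Fintype.card_sigma, hμ3]
  have hne : Nonempty (Σ k, Fin (μ k)) := by
    rw [← Fintype.card_pos_iff, hcard]; omega
  have hspan := hli.span_eq_top_of_card_eq_finrank (by simp [hcard])
  -- the linear functional x ↦ ∑ i, a i * x i
  let φ : (Fin (r + 1) → ℂ) →ₗ[ℂ] ℂ :=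
    { toFun := fun x => ∑ i, a i * x i
      map_add' := fun x y => by simp [mul_add, Finset.sum_add_distrib]
      map_smul' := fun t x => by
        simp [Finset.mul_sum, smul_eq_mul]
        apply Finset.sum_congr rfl
        intro i _
        ring }
  have hφ0 : ∀ p : (Σ k, Fin (μ k)),
      φ (fun i : Fin (r + 1) => z p.1 i (Fin.castLE (hμn p.1) p.2)) = 0 := by
    intro p
    show ∑ i, a i * z p.1 i (Fin.castLE (hμn p.1) p.2) = 0
    exact stepA p.1 _ (lt_of_lt_of_le p.2.isLt (hμ2 p.1))
  have hker : Submodule.span ℂ (Set.range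
      (fun p : (Σ k, Fin (μ k)) => fun i : Fin (r + 1) => z p.1 i (Fin.castLE (hμn p.1) p.2)))
      ≤ LinearMap.ker φ := by
    rw [Submodule.span_le]
    rintro x ⟨p, rfl⟩
    exact hφ0 p
  rw [hspan, top_le_iff] at hker
  funext i
  have hφ : φ = 0 := LinearMap.ker_eq_top.mp hker
  have h0 := LinearMap.congr_fun hφ (Pi.single i 1)
  simp only [LinearMap.zero_apply] at h0
  have hval : φ (Pi.single i 1) = a i := by
    show (∑ j : Fin (r + 1), a j * (Pi.single i (1:ℂ) : Fin (r+1) → ℂ) j) = a i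
    simp [Pi.single_apply]
  show a i = (0 : Fin (r + 1) → ℂ) i
  rw [Pi.zero_apply, ← hval]
  exact h0
end

section
/- Let $b\in\mathbb{C}^N$ be nonzero, written in blocks $b^{(k)}\in\mathbb{C}^{n_k}$ according to a partition $\lambda=(n_1,\dots,n_\ell)$ of $N$, and for each $k$ let $m_k$ be minimal with $b_{m_k}^{(k)}=\cdots=b_{n_k-1}^{(k)}=0$ (so $b_{m_k-1}^{(k)}\ne0$ if $m_k>0$). If $z\in Z_{r+1}$ is in the generic stratum and $zb=0$, then $m_1+\cdots+m_\ell > r+1$. -/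
/-!
If `∑ m_k ≤ r + 1`, enlarge the lengths `m_k` to `ν_k ≤ n_k` with `∑ ν_k = r + 1`. Since `b`
vanishes beyond position `ν_k` in every block, `z b = 0` is a linear relation among the columns of
the square matrix `z_ν` with coefficients `b_ν`; as these columns are independent, `b = 0`.
-/

open Finset Matrix

theorem Fintype.exists_le_le_sum_eq {ι : Type*} [Fintype ι] [DecidableEq ι] {m n : ι → ℕ}
    (hmn : m ≤ n) {t : ℕ} (hmt : ∑ k, m k ≤ t) (htn : t ≤ ∑ k, n k) :
    ∃ ν : ι → ℕ, m ≤ ν ∧ ν ≤ n ∧ ∑ k, ν k = t := by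
  induction t, hmt using Nat.le_induction with
  | base => exact ⟨m, le_rfl, hmn, rfl⟩
  | succ t _ ih =>
    obtain ⟨ν, hmν, hνn, hν⟩ := ih (by omega)
    obtain ⟨k, hk⟩ : ∃ k, ν k < n k := by
      by_contra! h
      have := sum_le_sum (s := univ) fun k _ => h k
      omega
    refine ⟨ν + Pi.single k 1, hmν.trans le_self_add, fun j => ?_, ?_⟩
    · rcases eq_or_ne j k with rfl | hj
      · simpa using hk
      · simpa [Pi.single_apply, hj] using hνn j
    · simp only [Pi.add_apply, sum_add_distrib, hν, sum_pi_single']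

theorem Fin.sum_castLE_eq_sum_of_eq_zero {M : Type*} [AddCommMonoid M] {a b : ℕ} (h : a ≤ b)
    {f : Fin b → M} (hf : ∀ j : Fin b, a ≤ (j : ℕ) → f j = 0) :
    ∑ j : Fin a, f (Fin.castLE h j) = ∑ j, f j := by
  rw [← Fin.coe_castLEEmb, ← sum_map univ (Fin.castLEEmb h) f]
  refine sum_subset (subset_univ _) fun j _ hj => hf j ?_
  by_contra! hja
  exact hj (mem_map.2 ⟨⟨j, hja⟩, mem_univ _, rfl⟩)

theorem Matrix.mulVec_eq_sum_castLE {R K : Type*} [CommSemiring K] {a b : ℕ} (h : a ≤ b)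
    (z : Matrix R (Fin b) K) {v : Fin b → K} (hv : ∀ j : Fin b, a ≤ (j : ℕ) → v j = 0) (i : R) :
    (z *ᵥ v) i = ∑ j : Fin a, v (Fin.castLE h j) * z i (Fin.castLE h j) := by
  rw [mulVec, dotProduct, ← Fin.sum_castLE_eq_sum_of_eq_zero h fun j hj => by simp [hv j hj]]
  exact sum_congr rfl fun j _ => mul_comm _ _

theorem eq_zero_of_sum_mulVec_eq_zero {ι R K : Type*} [Fintype ι] [CommRing K]
    {n ν : ι → ℕ} (hνn : ν ≤ n) (z : ∀ k, Matrix R (Fin (n k)) K)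
    (hz : LinearIndependent K
      (fun p : (Σ k, Fin (ν k)) => fun i => z p.1 i (Fin.castLE (hνn p.1) p.2)))
    (b : ∀ k, Fin (n k) → K) (htail : ∀ k (j : Fin (n k)), ν k ≤ (j : ℕ) → b k j = 0)
    (hzb : ∀ i, ∑ k, (z k *ᵥ b k) i = 0) :
    b = 0 := by
  have hsum : ∑ p : (Σ k, Fin (ν k)),
      b p.1 (Fin.castLE (hνn p.1) p.2) • (fun i => z p.1 i (Fin.castLE (hνn p.1) p.2)) = 0 := by
    funext i
    simp only [Finset.sum_apply, Pi.smul_apply, smul_eq_mul, Pi.zero_apply,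
      ← univ_sigma_univ, sum_sigma]
    simpa only [Matrix.mulVec_eq_sum_castLE (hνn _) _ (htail _)] using hzb i
  have hcoeff := Fintype.linearIndependent_iff.1 hz _ hsum
  funext k j
  by_cases hj : (j : ℕ) < ν k
  · exact hcoeff ⟨k, ⟨j, hj⟩⟩
  · exact htail k j (not_lt.1 hj)

theorem stmt15_general (ℓ r : ℕ) (n : Fin ℓ → ℕ) (hN : r + 1 < ∑ k, n k)
    (z : ∀ k, Matrix (Fin (r + 1)) (Fin (n k)) ℂ)
    (hz : ∀ μ : Fin ℓ → ℕ, ∀ hμ : (∀ k, μ k ≤ n k), (∑ k, μ k) = r + 1 →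
      LinearIndependent ℂ
        (fun p : (Σ k, Fin (μ k)) => fun i : Fin (r + 1) => z p.1 i (Fin.castLE (hμ p.1) p.2)))
    (b : ∀ k, Fin (n k) → ℂ) (hb : ∃ k j, b k j ≠ 0)
    (m : Fin ℓ → ℕ) (hmle : ∀ k, m k ≤ n k)
    (htail : ∀ k (j : Fin (n k)), m k ≤ (j : ℕ) → b k j = 0)
    (hzb : ∀ i, ∑ k, ((z k).mulVec (b k)) i = 0) :
    r + 1 < ∑ k, m k := by
  by_contra! hsmall
  obtain ⟨ν, hmν, hνn, hν⟩ := Fintype.exists_le_le_sum_eq hmle hsmall hN.le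
  have hb0 : b = 0 := eq_zero_of_sum_mulVec_eq_zero hνn z (hz ν hνn hν) b
    (fun k j hj => htail k j ((hmν k).trans hj)) hzb
  obtain ⟨k, j, hkj⟩ := hb
  exact hkj (congrFun (congrFun hb0 k) j)

/-- if `b ≠ 0`, `m_k` is minimal with `b^{(k)}_{m_k} = ⋯ = b^{(k)}_{n_k-1} = 0`,
`z` is in the generic stratum and `zb = 0`, then `m₁ + ⋯ + m_ℓ > r + 1`. -/
theorem stmt15 (ℓ r : ℕ) (n : Fin ℓ → ℕ) (hN : r + 1 < ∑ k, n k)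
    (z : ∀ k, Matrix (Fin (r + 1)) (Fin (n k)) ℂ)
    (hz : ∀ μ : Fin ℓ → ℕ, ∀ hμ : (∀ k, μ k ≤ n k), (∑ k, μ k) = r + 1 →
      LinearIndependent ℂ
        (fun p : (Σ k, Fin (μ k)) => fun i : Fin (r + 1) => z p.1 i (Fin.castLE (hμ p.1) p.2)))
    (b : ∀ k, Fin (n k) → ℂ) (hb : ∃ k j, b k j ≠ 0)
    (m : Fin ℓ → ℕ) (hmle : ∀ k, m k ≤ n k)
    (htail : ∀ k (j : Fin (n k)), m k ≤ (j : ℕ) → b k j = 0)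
    (hmin : ∀ k (h : 0 < m k),
      b k ⟨m k - 1, lt_of_lt_of_le (Nat.sub_lt h Nat.one_pos) (hmle k)⟩ ≠ 0)
    (hzb : ∀ i, ∑ k, ((z k).mulVec (b k)) i = 0) :
    r + 1 < ∑ k, m k :=
  stmt15_general ℓ r n hN z hz b hb m hmle htail hzb
end
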